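/- Mirror-descent guarantee for the Hedge algorithm: let η > 0, let T ≥ 1, and run the Hedge algorithm where in every round t ∈ {1,…,T} the point θ_t is a best response to p_t. Then f(p̄_T) ≤ (1/T)·Σ_{t=1}^T R(p_t,θ_t) ≤ v̄ + η·M²/2 + ln(I)/(T·η), where p̄_T = (1/T)·Σ_{t=1}^T p_t and v̄ = inf_{p∈Δ} f(p). -/

import Mathlib

/-!
With `W_t = ∑ᵢ w_{t,i}`, one Hedge round multiplies the total weight by `∑ᵢ p_{t,i} e^{-η R(i,θ_t)}`,
which `e^{-x} ≤ 1 - x + x²/2` and `1 + y ≤ e^y` bound by `exp (-η R(p_t,θ_t) + η²M²/2)`. Hence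
`e^{-η ∑_t R(i,θ_t)} = w_{T,i} ≤ W_T ≤ I · exp (-η ∑_t R(p_t,θ_t) + Tη²M²/2)` for every expert `i`;
averaging over `i` against any `q ∈ Δ` and using `R(q,θ_t) ≤ f(q)` gives the upper bound. The lower
bound holds because `R(p_t,θ_t) = f(p_t)` at a best response and `R(·,θ)` is linear.
-/

open Finset Real

theorem Real.exp_neg_le_one_sub_add_sq_div_two {x : ℝ} (hx : 0 ≤ x) :
    exp (-x) ≤ 1 - x + x ^ 2 / 2 := by
  have hderiv : ∀ y : ℝ,
      HasDerivAt (fun z ↦ 1 - z + z ^ 2 / 2 - exp (-z)) (-1 + y + exp (-y)) y := by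
    intro y
    have h := (((hasDerivAt_id' y).const_sub 1).add ((hasDerivAt_pow 2 y).div_const 2)).sub
      (hasDerivAt_neg' y).exp
    exact h.congr_deriv (by norm_num)
  have hmono : Monotone fun z ↦ 1 - z + z ^ 2 / 2 - exp (-z) :=
    monotone_of_hasDerivAt_nonneg (f' := fun y ↦ -1 + y + exp (-y)) hderiv fun y ↦ by
      simp only [Pi.zero_apply]; linarith [add_one_le_exp (-y)]
  simpa using hmono hx

theorem sum_mul_exp_neg_le_exp {ι : Type*} [Fintype ι] {q : ι → ℝ} (hq : q ∈ stdSimplex ℝ ι)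
    {ℓ : ι → ℝ} {M η : ℝ} (hℓ : ∀ i, 0 ≤ ℓ i ∧ ℓ i ≤ M) (hη : 0 ≤ η) :
    ∑ i, q i * exp (-η * ℓ i) ≤ exp (-η * ∑ i, q i * ℓ i + η ^ 2 * M ^ 2 / 2) := by
  have hpoint : ∀ i, exp (-η * ℓ i) ≤ 1 - η * ℓ i + η ^ 2 * M ^ 2 / 2 := by
    intro i
    have hηℓ : 0 ≤ η * ℓ i := mul_nonneg hη (hℓ i).1
    have hsq : (η * ℓ i) ^ 2 ≤ η ^ 2 * M ^ 2 := by
      rw [← mul_pow]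
      exact pow_le_pow_left₀ hηℓ (mul_le_mul_of_nonneg_left (hℓ i).2 hη) 2
    rw [neg_mul]
    linarith [exp_neg_le_one_sub_add_sq_div_two hηℓ]
  calc ∑ i, q i * exp (-η * ℓ i)
      ≤ ∑ i, q i * (1 - η * ℓ i + η ^ 2 * M ^ 2 / 2) :=
        sum_le_sum fun i _ ↦ mul_le_mul_of_nonneg_left (hpoint i) (hq.1 i)
    _ = ∑ i, q i - η * ∑ i, q i * ℓ i + (∑ i, q i) * (η ^ 2 * M ^ 2 / 2) := by
        rw [mul_sum, sum_mul, ← sum_sub_distrib, ← sum_add_distrib]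
        exact sum_congr rfl fun i _ ↦ by ring
    _ = -η * ∑ i, q i * ℓ i + η ^ 2 * M ^ 2 / 2 + 1 := by
        rw [hq.2]
        ring
    _ ≤ _ := add_one_le_exp _

section Hedge

variable {ι : Type*} [Fintype ι]

structure IsHedge (η : ℝ) (ℓ : ℕ → ι → ℝ) (w p : ℕ → ι → ℝ) : Prop where
  weight_zero : ∀ i, w 0 i = 1
  weight_succ : ∀ t i, w (t + 1) i = w t i * exp (-η * ℓ (t + 1) i)
  iterate_succ : ∀ t i, p (t + 1) i = w t i / ∑ j, w t j

namespace IsHedge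

variable {η M : ℝ} {ℓ : ℕ → ι → ℝ} {w p : ℕ → ι → ℝ}

theorem weight_eq (h : IsHedge η ℓ w p) (n : ℕ) (i : ι) :
    w n i = exp (-η * ∑ t ∈ Icc 1 n, ℓ t i) := by
  induction n with
  | zero => simp [h.weight_zero]
  | succ n ih =>
    rw [h.weight_succ, ih, ← exp_add, sum_Icc_succ_top (Nat.le_add_left 1 n)]
    ring_nf

theorem totalWeight_pos [Nonempty ι] (h : IsHedge η ℓ w p) (n : ℕ) : 0 < ∑ j, w n j :=
  sum_pos (fun i _ ↦ h.weight_eq n i ▸ exp_pos _) univ_nonempty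

theorem mem_stdSimplex [Nonempty ι] (h : IsHedge η ℓ w p) {t : ℕ} (ht : 1 ≤ t) :
    p t ∈ stdSimplex ℝ ι := by
  obtain ⟨s, rfl⟩ := Nat.exists_eq_add_of_le' ht
  have hW := h.totalWeight_pos s
  refine ⟨fun i ↦ ?_, ?_⟩
  · rw [h.iterate_succ, h.weight_eq]
    exact div_nonneg (exp_pos _).le hW.le
  · simp only [h.iterate_succ, ← sum_div, div_self hW.ne']

theorem totalWeight_succ [Nonempty ι] (h : IsHedge η ℓ w p) (t : ℕ) :
    ∑ j, w (t + 1) j = (∑ j, w t j) * ∑ i, p (t + 1) i * exp (-η * ℓ (t + 1) i) := by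
  have hW := (h.totalWeight_pos t).ne'
  rw [mul_sum]
  exact sum_congr rfl fun i _ ↦ by rw [h.weight_succ, h.iterate_succ]; field_simp

theorem totalWeight_le [Nonempty ι] (h : IsHedge η ℓ w p) (hℓ : ∀ t i, 0 ≤ ℓ t i ∧ ℓ t i ≤ M)
    (hη : 0 ≤ η) (n : ℕ) :
    ∑ j, w n j ≤
      Fintype.card ι * exp (-η * ∑ t ∈ Icc 1 n, ∑ i, p t i * ℓ t i + n * (η ^ 2 * M ^ 2 / 2)) := by
  induction n with
  | zero => simp [h.weight_zero]
  | succ n ih =>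
    have hpΔ := h.mem_stdSimplex (Nat.le_add_left 1 n)
    have hmix_nonneg : 0 ≤ ∑ i, p (n + 1) i * exp (-η * ℓ (n + 1) i) :=
      sum_nonneg fun i _ ↦ mul_nonneg (hpΔ.1 i) (exp_pos _).le
    calc ∑ j, w (n + 1) j
        = (∑ j, w n j) * ∑ i, p (n + 1) i * exp (-η * ℓ (n + 1) i) := h.totalWeight_succ n
      _ ≤ _ := mul_le_mul ih (sum_mul_exp_neg_le_exp hpΔ (hℓ (n + 1)) hη) hmix_nonneg
          (by positivity)
      _ = _ := by
          rw [mul_assoc, ← exp_add, sum_Icc_succ_top (Nat.le_add_left 1 n)]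
          push_cast
          ring_nf

theorem regret_le [Nonempty ι] (h : IsHedge η ℓ w p) (hℓ : ∀ t i, 0 ≤ ℓ t i ∧ ℓ t i ≤ M)
    (hη : 0 < η) (n : ℕ) (i : ι) :
    ∑ t ∈ Icc 1 n, ∑ j, p t j * ℓ t j ≤
      ∑ t ∈ Icc 1 n, ℓ t i + n * (η * M ^ 2 / 2) + log (Fintype.card ι) / η := by
  have hweight : exp (-η * ∑ t ∈ Icc 1 n, ℓ t i) ≤ Fintype.card ι *
      exp (-η * ∑ t ∈ Icc 1 n, ∑ j, p t j * ℓ t j + n * (η ^ 2 * M ^ 2 / 2)) := by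
    rw [← h.weight_eq]
    exact (single_le_sum (fun j _ ↦ (h.weight_eq n j ▸ exp_pos _).le) (mem_univ i)).trans
      (h.totalWeight_le hℓ hη.le n)
  have hlog := log_le_log (exp_pos _) hweight
  rw [log_exp, log_mul (by positivity) (exp_pos _).ne', log_exp] at hlog
  refine le_of_mul_le_mul_left ?_ hη
  rw [mul_add, mul_add, mul_div_cancel₀ _ hη.ne']
  linarith

theorem regret_le_of_mem_stdSimplex [Nonempty ι] (h : IsHedge η ℓ w p)
    (hℓ : ∀ t i, 0 ≤ ℓ t i ∧ ℓ t i ≤ M) (hη : 0 < η) (n : ℕ) {q : ι → ℝ}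
    (hq : q ∈ stdSimplex ℝ ι) :
    ∑ t ∈ Icc 1 n, ∑ j, p t j * ℓ t j ≤
      ∑ t ∈ Icc 1 n, ∑ i, q i * ℓ t i + n * (η * M ^ 2 / 2) + log (Fintype.card ι) / η := by
  calc ∑ t ∈ Icc 1 n, ∑ j, p t j * ℓ t j
      = ∑ i, q i * ∑ t ∈ Icc 1 n, ∑ j, p t j * ℓ t j := by rw [← sum_mul, hq.2, one_mul]
    _ ≤ ∑ i, q i * (∑ t ∈ Icc 1 n, ℓ t i + n * (η * M ^ 2 / 2) + log (Fintype.card ι) / η) :=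
        sum_le_sum fun i _ ↦ mul_le_mul_of_nonneg_left (h.regret_le hℓ hη n i) (hq.1 i)
    _ = _ := by
        simp only [mul_add, sum_add_distrib, ← sum_mul, hq.2, one_mul, mul_sum]
        rw [sum_comm]

end IsHedge

end Hedge

section Game

variable {ι Θ κ : Type*} [Fintype ι] {R : ι → Θ → ℝ} {M : ℝ}

theorem bddAbove_range_sum_mul {q : ι → ℝ} (hq : ∀ i, 0 ≤ q i) (hR : ∀ i θ, R i θ ≤ M) :
    BddAbove (Set.range fun θ ↦ ∑ i, q i * R i θ) := by
  refine ⟨∑ i, q i * M, ?_⟩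
  rintro _ ⟨θ, rfl⟩
  exact sum_le_sum fun i _ ↦ mul_le_mul_of_nonneg_left (hR i θ) (hq i)

theorem ciSup_sum_mul_le_of_bestResponse [Nonempty Θ] {s : Finset κ} {p : κ → ι → ℝ}
    {θ : κ → Θ} {c : ℝ} (hc : 0 ≤ c) (hp : ∀ t ∈ s, ∀ i, 0 ≤ p t i) (hR : ∀ i θ, R i θ ≤ M)
    (hbr : ∀ t ∈ s, ∑ i, p t i * R i (θ t) = ⨆ θ', ∑ i, p t i * R i θ') :
    ⨆ θ', ∑ i, (c * ∑ t ∈ s, p t i) * R i θ' ≤ c * ∑ t ∈ s, ∑ i, p t i * R i (θ t) := by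
  refine ciSup_le fun θ' ↦ ?_
  calc ∑ i, (c * ∑ t ∈ s, p t i) * R i θ' = c * ∑ t ∈ s, ∑ i, p t i * R i θ' := by
        simp only [mul_assoc, sum_mul, mul_sum]
        rw [sum_comm]
    _ ≤ _ := by
        refine mul_le_mul_of_nonneg_left (sum_le_sum fun t ht ↦ ?_) hc
        rw [hbr t ht]
        exact le_ciSup (bddAbove_range_sum_mul (hp t ht) hR) θ'

end Game

theorem hedge_mirror_descent_guarantee_general
    (I : ℕ) (hI : 0 < I) (Θ : Type*) [Nonempty Θ] (M : ℝ)
    (R : Fin I → Θ → ℝ) (hR : ∀ i θ, 0 ≤ R i θ ∧ R i θ ≤ M)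
    (η : ℝ) (hη : 0 < η) (T : ℕ) (hT : 1 ≤ T)
    (θ : ℕ → Θ) (w : ℕ → Fin I → ℝ) (p : ℕ → Fin I → ℝ)
    (hw0 : ∀ i, w 0 i = 1)
    (hw : ∀ t i, w (t + 1) i = w t i * Real.exp (-η * R i (θ (t + 1))))
    (hp : ∀ t i, p (t + 1) i = w t i / ∑ j, w t j)
    (hbr : ∀ t ∈ Finset.Icc 1 T,
      ∑ i, p t i * R i (θ t) = ⨆ θ' : Θ, ∑ i, p t i * R i θ') :
    (⨆ θ' : Θ, ∑ i, ((1 / (T : ℝ)) * ∑ t ∈ Finset.Icc 1 T, p t i) * R i θ')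
        ≤ (1 / (T : ℝ)) * ∑ t ∈ Finset.Icc 1 T, ∑ i, p t i * R i (θ t)
      ∧ (1 / (T : ℝ)) * ∑ t ∈ Finset.Icc 1 T, ∑ i, p t i * R i (θ t)
        ≤ sInf {v : ℝ | ∃ q : Fin I → ℝ, (∀ i, 0 ≤ q i) ∧ ∑ i, q i = 1 ∧
              v = ⨆ θ' : Θ, ∑ i, q i * R i θ'}
          + η * M ^ 2 / 2 + Real.log I / ((T : ℝ) * η) := by
  have : Nonempty (Fin I) := ⟨⟨0, hI⟩⟩
  have hT0 : (0 : ℝ) < T := by exact_mod_cast hT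
  have hRle : ∀ i θ, R i θ ≤ M := fun i θ ↦ (hR i θ).2
  have hH : IsHedge η (fun t i ↦ R i (θ t)) w p := ⟨hw0, hw, hp⟩
  refine ⟨ciSup_sum_mul_le_of_bestResponse (by positivity)
    (fun t ht ↦ (hH.mem_stdSimplex (mem_Icc.1 ht).1).1) hRle hbr, ?_⟩
  rw [add_assoc, ← sub_le_iff_le_add]
  refine le_csInf ⟨_, _, (single_mem_stdSimplex ℝ (⟨0, hI⟩ : Fin I)).1,
    (single_mem_stdSimplex ℝ _).2, rfl⟩ ?_
  rintro _ ⟨q, hq0, hq1, rfl⟩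
  have hregret := hH.regret_le_of_mem_stdSimplex (fun t i ↦ hR i (θ t)) hη T ⟨hq0, hq1⟩
  have hgame : ∑ t ∈ Icc 1 T, ∑ i, q i * R i (θ t) ≤ T * ⨆ θ', ∑ i, q i * R i θ' := by
    simpa using sum_le_card_nsmul (Icc 1 T) _ _ fun t _ ↦
      le_ciSup (bddAbove_range_sum_mul hq0 hRle) (θ t)
  rw [Fintype.card_fin] at hregret
  calc _ ≤ (1 / (T : ℝ)) * (T * (⨆ θ', ∑ i, q i * R i θ') + T * (η * M ^ 2 / 2) + log I / η)
          - (η * M ^ 2 / 2 + log I / (T * η)) := by gcongr; linarith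
    _ = _ := by field_simp; ring

/-- Mirror-descent guarantee for Hedge: running Hedge against best responses,
`f(p̄_T) ≤ (1/T) Σ_t R(p_t,θ_t) ≤ v̄ + η M²/2 + ln I/(T η)`. -/
theorem hedge_mirror_descent_guarantee
    (I : ℕ) (hI : 0 < I) (Θ : Type*) [Nonempty Θ] (M : ℝ) (hM : 0 < M)
    (R : Fin I → Θ → ℝ) (hR : ∀ i θ, 0 ≤ R i θ ∧ R i θ ≤ M)
    (η : ℝ) (hη : 0 < η) (T : ℕ) (hT : 1 ≤ T)
    (θ : ℕ → Θ) (w : ℕ → Fin I → ℝ) (p : ℕ → Fin I → ℝ)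
    (hw0 : ∀ i, w 0 i = 1)
    (hw : ∀ t i, w (t + 1) i = w t i * Real.exp (-η * R i (θ (t + 1))))
    (hp : ∀ t i, p (t + 1) i = w t i / ∑ j, w t j)
    (hbr : ∀ t ∈ Finset.Icc 1 T,
      ∑ i, p t i * R i (θ t) = ⨆ θ' : Θ, ∑ i, p t i * R i θ') :
    (⨆ θ' : Θ, ∑ i, ((1 / (T : ℝ)) * ∑ t ∈ Finset.Icc 1 T, p t i) * R i θ')
        ≤ (1 / (T : ℝ)) * ∑ t ∈ Finset.Icc 1 T, ∑ i, p t i * R i (θ t)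
      ∧ (1 / (T : ℝ)) * ∑ t ∈ Finset.Icc 1 T, ∑ i, p t i * R i (θ t)
        ≤ sInf {v : ℝ | ∃ q : Fin I → ℝ, (∀ i, 0 ≤ q i) ∧ ∑ i, q i = 1 ∧
              v = ⨆ θ' : Θ, ∑ i, q i * R i θ'}
          + η * M ^ 2 / 2 + Real.log I / ((T : ℝ) * η) :=
  hedge_mirror_descent_guarantee_general I hI Θ M R hR η hη T hT θ w p hw0 hw hp hbr
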